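/- Let H be a Hopf algebra with nonzero left integral ∫ whose associated form b(x,y)=∫(xS(y)) is non-degenerate. For right H-comodules V and W, a linear map f: V → W is a homomorphism of H-comodules if and only if it is a homomorphism of left (H,*)-modules, where h * v := v₀∫(v₁S(h)). In particular Hom_{(H,*)}(V,W) = Hom^H(V,W). -/
import Mathlib


open TensorProduct LinearMap

noncomputable section

variable (k : Type*) [Field k] (H : Type*) [Ring H] [HopfAlgebra k H]

/-- `∫` is a left integral on `H`: `a₁ ∫(a₂) = ∫(a) 1` for all `a`. -/
def IsLeftIntegral (I : H →ₗ[k] k) : Prop :=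
  ∀ a : H, TensorProduct.rid k H (LinearMap.lTensor H I (Coalgebra.comul a)) = I a • (1 : H)

/-- `∫` is a right integral on `H`: `∫(a₁) a₂ = ∫(a) 1` for all `a`. -/
def IsRightIntegral (I : H →ₗ[k] k) : Prop :=
  ∀ a : H, TensorProduct.lid k H (LinearMap.rTensor H I (Coalgebra.comul a)) = I a • (1 : H)

/-- The linear map `h ⊗ g ↦ ∫(h S(g))`. -/
def intPair (I : H →ₗ[k] k) : H ⊗[k] H →ₗ[k] k :=
  I ∘ₗ LinearMap.mul' k H ∘ₗ LinearMap.lTensor H (HopfAlgebra.antipode (R := k))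

/-- The linear map `g ⊗ h ↦ h₁ ∫(h₂ S(g))` (the convolution product). -/
def convMap (I : H →ₗ[k] k) : H ⊗[k] H →ₗ[k] H :=
  (TensorProduct.rid k H).toLinearMap
    ∘ₗ LinearMap.lTensor H (intPair k H I)
    ∘ₗ (TensorProduct.assoc k H H H).toLinearMap
    ∘ₗ (Coalgebra.comul (R := k)).rTensor H
    ∘ₗ (TensorProduct.comm k H H).toLinearMap

/-- The convolution product `g * h := h₁ ∫(h₂ S(g))`. -/
def convProd (I : H →ₗ[k] k) (g h : H) : H := convMap k H I (g ⊗ₜ h)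

/-- The linear map `g ⊗ h ↦ ∫(h S(g₁)) g₂`. -/
def convMap' (I : H →ₗ[k] k) : H ⊗[k] H →ₗ[k] H :=
  (TensorProduct.lid k H).toLinearMap
    ∘ₗ (intPair k H I).rTensor H
    ∘ₗ (TensorProduct.assoc k H H H).symm.toLinearMap
    ∘ₗ LinearMap.lTensor H (Coalgebra.comul (R := k))
    ∘ₗ (TensorProduct.comm k H H).toLinearMap

variable (V W : Type*) [AddCommGroup V] [Module k V] [AddCommGroup W] [Module k W]

/-- The action `h * v := v₀ ∫(v₁ S(h))` of `(H,*)` on a right `H`-comodule. -/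
def convAct (I : H →ₗ[k] k) (ρ : V →ₗ[k] V ⊗[k] H) (h : H) : V →ₗ[k] V :=
  (TensorProduct.rid k V).toLinearMap
    ∘ₗ LinearMap.lTensor V (I ∘ₗ LinearMap.mulRight k (HopfAlgebra.antipode (R := k) h))
    ∘ₗ ρ

/-- `ρ` is a (counital, coassociative) right comodule coaction. -/
def IsCoact {V : Type*} [AddCommGroup V] [Module k V] (ρ : V →ₗ[k] V ⊗[k] H) : Prop :=
  ((TensorProduct.assoc k V H H).toLinearMap ∘ₗ ρ.rTensor H ∘ₗ ρ
      = (LinearMap.lTensor V (Coalgebra.comul (R := k))) ∘ₗ ρ) ∧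
  ((TensorProduct.rid k V).toLinearMap ∘ₗ LinearMap.lTensor V (Coalgebra.counit (R := k)) ∘ₗ ρ
      = LinearMap.id)


/-- If a family of functionals separates points of `H`, then killing `t : W ⊗ H`
by all of them (on the right factor) forces `t = 0`. -/
lemma aux_sep_tensor (Φ : H → (H →ₗ[k] k))
    (hsep : ∀ x : H, (∀ h : H, Φ h x = 0) → x = 0)
    (t : W ⊗[k] H) (ht : ∀ h : H, LinearMap.lTensor W (Φ h) t = 0) : t = 0 := by
  classical
  let bW := Module.Basis.ofVectorSpace k W
  let e : W ⊗[k] H ≃ₗ[k] (Module.Basis.ofVectorSpaceIndex k W) →₀ H :=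
    (TensorProduct.congr bW.repr (LinearEquiv.refl k H)).trans
      (TensorProduct.finsuppScalarLeft k H _)
  have key : ∀ (u : W ⊗[k] H) (g : H →ₗ[k] k) (i : Module.Basis.ofVectorSpaceIndex k W),
      g ((e u) i) = bW.coord i ((TensorProduct.rid k W) (LinearMap.lTensor W g u)) := by
    intro u g i
    induction u using TensorProduct.induction_on with
    | zero => simp
    | tmul w x =>
        simp [e, TensorProduct.finsuppScalarLeft_apply_tmul_apply, mul_comm, bW]
    | add u v hu hv => simp [map_add, hu, hv]
  apply e.injective
  rw [map_zero]
  ext i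
  refine hsep _ (fun h => ?_)
  rw [key t (Φ h) i, ht h]
  simp

/-- Naturality of `rid ∘ lTensor g` with respect to a map on the left factor. -/
lemma aux_nat {V' : Type*} [AddCommGroup V'] [Module k V']
    (g : H →ₗ[k] k) (f : V' →ₗ[k] W) (u : V' ⊗[k] H) :
    f ((TensorProduct.rid k V') (LinearMap.lTensor V' g u))
      = (TensorProduct.rid k W) (LinearMap.lTensor W g (f.rTensor H u)) := by
  induction u using TensorProduct.induction_on with
  | zero => simp
  | tmul v x => simp
  | add u v hu hv => simp [map_add, hu, hv]

/-- Let `H` have a nonzero left integral whose form `b(x,y) = ∫(x S(y))` is non-degenerate.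
A linear map `f : V → W` of right `H`-comodules is a comodule homomorphism iff it is a
homomorphism of left `(H,*)`-modules for the actions `h * v := v₀ ∫(v₁ S(h))`. -/
theorem comodHom_iff_convModHom (I : H →ₗ[k] k) (hI : IsLeftIntegral k H I) (hne : I ≠ 0)
    (hb : (∀ x : H, x ≠ 0 → ∃ y : H, I (x * HopfAlgebra.antipode (R := k) y) ≠ 0) ∧
          (∀ y : H, y ≠ 0 → ∃ x : H, I (x * HopfAlgebra.antipode (R := k) y) ≠ 0))
    (ρV : V →ₗ[k] V ⊗[k] H) (hV : IsCoact k H ρV)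
    (ρW : W →ₗ[k] W ⊗[k] H) (hW : IsCoact k H ρW) (f : V →ₗ[k] W) :
    (ρW ∘ₗ f = f.rTensor H ∘ₗ ρV) ↔
      (∀ (h : H) (v : V), f (convAct k H V I ρV h v) = convAct k H W I ρW h (f v)) := by
  constructor
  · intro hc h v
    have hv' : ρW (f v) = f.rTensor H (ρV v) := LinearMap.congr_fun hc v
    simp only [convAct, LinearMap.coe_comp, Function.comp_apply, LinearEquiv.coe_coe]
    rw [hv', ← aux_nat]
  · intro hm
    have hsep : ∀ x : H, (∀ h : H,
        (I ∘ₗ LinearMap.mulRight k (HopfAlgebra.antipode (R := k) h)) x = 0) → x = 0 := by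
      intro x hx
      by_contra hx0
      obtain ⟨y, hy⟩ := hb.1 x hx0
      exact hy (by simpa using hx y)
    ext v
    simp only [LinearMap.coe_comp, Function.comp_apply]
    have key : ρW (f v) - f.rTensor H (ρV v) = 0 := by
      refine aux_sep_tensor k H W _ hsep _ (fun h => ?_)
      have h0 : (TensorProduct.rid k W)
          (LinearMap.lTensor W (I ∘ₗ LinearMap.mulRight k (HopfAlgebra.antipode (R := k) h))
            (ρW (f v) - f.rTensor H (ρV v))) = 0 := by
        rw [map_sub, map_sub, ← aux_nat]
        have := hm h v
        simp only [convAct, LinearMap.coe_comp, Function.comp_apply, LinearEquiv.coe_coe] at this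
        rw [← this, sub_self]
      exact (TensorProduct.rid k W).map_eq_zero_iff.mp (by rw [← h0])
    exact sub_eq_zero.mp key


end
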